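/- arXiv:math/0507162 — 9 statements merged into one kernel-verified Lean document; each statement's English description precedes it below -/
import Mathlib

section
/- With r, d, s, ε, w, v, G, k, δ, R as in the context, the rational number R satisfies |R| ≤ s³/(r-2). (This is the bound on the correction term R in the formula G(r;d,s) = d²/(2s) + (d/(2s))(2G-2-s) + R for the maximal genus of degree-d curves in P^r not on surfaces of degree < s, used throughout the proofs of Theorem B and Proposition 2.) -/
set_option maxHeartbeats 1000000 in
/-- Auxiliary integer bound: the numerator polynomial `P = 2s(r-2)R` satisfies
`-2s⁴ ≤ P ≤ 2s⁴`. -/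
lemma aux_bound (r s ε w v k δ : ℤ)
    (hr2 : 1 ≤ r - 2) (hs2 : 2 ≤ s) (hr2s : r - 2 ≤ s - 1)
    (hε0 : 0 ≤ ε) (hε1 : ε ≤ s - 1)
    (hw1 : 1 ≤ w) (hwr : w * (r - 2) ≤ s - 1) (hws : w ≤ s - 1)
    (hG20 : 0 ≤ w * (w - 1) * (r - 2) + 2 * (w * v))
    (hG2le : w * (w - 1) * (r - 2) + 2 * (w * v) ≤ (s - 1) * (s - 2))
    (hδ0 : 0 ≤ δ) (hδw : δ ≤ w)
    (hC0 : 0 ≤ k * (w * (w + 1)))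
    (hCu : (r - 2) * (k * (w * (w + 1))) ≤ 2 * ((s - 1) * (s - 1)))
    (hεδ : -(s - 1) ≤ ε - δ) :
    -(2 * s ^ 4) ≤ (r - 2) * ((1 + ε) * (s + 1 - ε - (w * (w - 1) * (r - 2) + 2 * (w * v))))
        + 2 * s * ((r - 2) * (w * (ε - δ))) - s * ((r - 2) * (k * (w * (w + 1))))
        + s * ((r - 2) * (δ * (δ - 1)))
      ∧ (r - 2) * ((1 + ε) * (s + 1 - ε - (w * (w - 1) * (r - 2) + 2 * (w * v))))
        + 2 * s * ((r - 2) * (w * (ε - δ))) - s * ((r - 2) * (k * (w * (w + 1))))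
        + s * ((r - 2) * (δ * (δ - 1))) ≤ 2 * s ^ 4 := by
  set G2 : ℤ := w * (w - 1) * (r - 2) + 2 * (w * v) with hG2def
  have hs0 : (0 : ℤ) ≤ s := by linarith
  have hs10 : (0 : ℤ) ≤ s - 1 := by linarith
  have hwr1 : 1 ≤ w * (r - 2) := by nlinarith
  have hεδu : ε - δ ≤ s - 1 := by linarith
  -- bounds for the B-term
  have hBu : (r - 2) * (w * (ε - δ)) ≤ 2 * ((s - 1) * (s - 1)) := by
    nlinarith [mul_nonneg (by linarith : (0:ℤ) ≤ s - 1 - w * (r - 2))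
      (by linarith : (0:ℤ) ≤ (ε - δ) + (s - 1))]
  have hBl : -(2 * ((s - 1) * (s - 1))) ≤ (r - 2) * (w * (ε - δ)) := by
    nlinarith [mul_nonneg (by linarith : (0:ℤ) ≤ s - 1 - w * (r - 2))
      (by linarith : (0:ℤ) ≤ (s - 1) - (ε - δ))]
  -- bounds for the D-term
  have hD0 : 0 ≤ δ * (δ - 1) := by
    have h : δ = 0 ∨ 1 ≤ δ := by omega
    rcases h with h | h
    · simp [h]
    · exact mul_nonneg hδ0 (by linarith)
  have hDδw : δ * (δ - 1) ≤ w * w := by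
    nlinarith [mul_nonneg (by linarith : (0:ℤ) ≤ w - δ) hδ0,
      mul_nonneg (by linarith : (0:ℤ) ≤ w - δ) (by linarith : (0:ℤ) ≤ w)]
  have hDu : (r - 2) * (δ * (δ - 1)) ≤ (s - 1) * (s - 1) := by
    have h2 : (r - 2) * (δ * (δ - 1)) ≤ (r - 2) * (w * w) :=
      mul_le_mul_of_nonneg_left hDδw (by linarith)
    have h3 : (r - 2) * (w * w) ≤ (s - 1) * w := by nlinarith
    have h4 : (s - 1) * w ≤ (s - 1) * (s - 1) :=
      mul_le_mul_of_nonneg_left hws hs10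
    linarith
  -- bounds for the A-term
  have hss1 : (0:ℤ) ≤ s * (s + 1) := by nlinarith
  have hsM : (0:ℤ) ≤ s * ((s - 1) * (s - 1)) := by positivity
  have hXu : (1 + ε) * (s + 1 - ε - G2) ≤ s * (s + 1) := by
    nlinarith [sq_nonneg (s - 2 * ε), mul_nonneg (by linarith : (0:ℤ) ≤ 1 + ε) hG20]
  have hεG2 : ε + G2 ≤ (s - 1) * (s - 1) := by nlinarith
  have hXl : -(s * ((s - 1) * (s - 1))) ≤ (1 + ε) * (s + 1 - ε - G2) := by
    nlinarith [mul_nonneg (by linarith : (0:ℤ) ≤ 1 + ε) (by linarith : (0:ℤ) ≤ s + 1),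
      mul_le_mul (by linarith : 1 + ε ≤ s) hεG2
        (by linarith : (0:ℤ) ≤ ε + G2) hs0]
  have hAu : (r - 2) * ((1 + ε) * (s + 1 - ε - G2)) ≤ (s - 1) * (s * (s + 1)) := by
    nlinarith [mul_nonneg (by linarith : (0:ℤ) ≤ r - 3)
      (by linarith : (0:ℤ) ≤ s * (s + 1) - (1 + ε) * (s + 1 - ε - G2)),
      mul_nonneg (by linarith : (0:ℤ) ≤ s - 1 - (r - 2)) hss1]
  have hAl : -((s - 1) * (s * ((s - 1) * (s - 1)))) ≤ (r - 2) * ((1 + ε) * (s + 1 - ε - G2)) := by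
    nlinarith [mul_nonneg (by linarith : (0:ℤ) ≤ r - 3)
      (by linarith : (0:ℤ) ≤ (1 + ε) * (s + 1 - ε - G2) + s * ((s - 1) * (s - 1))),
      mul_nonneg (by linarith : (0:ℤ) ≤ s - 1 - (r - 2)) hsM]
  -- multiply the middle bounds by s
  have h2s : (0:ℤ) ≤ 2 * s := by linarith
  have hBus := mul_le_mul_of_nonneg_left hBu h2s
  have hBls := mul_le_mul_of_nonneg_left hBl h2s
  have hCus := mul_le_mul_of_nonneg_left hCu hs0
  have hC0s := mul_nonneg hs0 (mul_nonneg (by linarith : (0:ℤ) ≤ r - 2) hC0)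
  have hDus := mul_le_mul_of_nonneg_left hDu hs0
  have hD0s := mul_nonneg hs0 (mul_nonneg (by linarith : (0:ℤ) ≤ r - 2) hD0)
  -- single-variable polynomial estimates
  have hq3 : (0:ℤ) ≤ s * s - s + 3 := by nlinarith
  have hq7 : (0:ℤ) ≤ s * s - s + 7 := by nlinarith
  have he1 : (0:ℤ) ≤ s * ((s - 2) * (s * s - s + 3)) :=
    mul_nonneg hs0 (mul_nonneg (by linarith) hq3)
  have he2 : (0:ℤ) ≤ s * ((s - 2) * (s * s - s + 7)) :=
    mul_nonneg hs0 (mul_nonneg (by linarith) hq7)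
  have hpoly1 : (s - 1) * (s * (s + 1)) + 2 * s * (2 * ((s - 1) * (s - 1)))
      + s * ((s - 1) * (s - 1)) ≤ 2 * s ^ 4 := by nlinarith [he1, hs0]
  have hpoly2 : (s - 1) * (s * ((s - 1) * (s - 1))) + 2 * s * (2 * ((s - 1) * (s - 1)))
      + s * (2 * ((s - 1) * (s - 1))) ≤ 2 * s ^ 4 := by nlinarith [he2, hs0]
  constructor
  · linarith [hAl, hBls, hCus, hD0s, hpoly2]
  · linarith [hAu, hBus, hC0s, hDus, hpoly1]

set_option maxHeartbeats 1000000 in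
/-- With `r, d, s, ε, w, v, G, k, δ, R` as in the context, the rational
number `R` satisfies `|R| ≤ s³/(r-2)`. -/
theorem stmt_0 (r d s m ε w v G k δ : ℤ) (R : ℚ)
    (hr : 2 ≤ r - 1) (hs : r - 1 ≤ s)
    (hdiv : d - 1 = m * s + ε) (hε0 : 0 ≤ ε) (hε1 : ε ≤ s - 1)
    (hwv : s - 1 = w * (r - 2) + v) (hv0 : 0 ≤ v) (hv1 : v ≤ r - 3)
    (hG : (G : ℚ) = (w : ℚ) * (w - 1) / 2 * (r - 2) + (w : ℚ) * v)
    (hkδ : if ε < w * (r - 1 - v)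
      then ε = k * w + δ ∧ 0 ≤ δ ∧ δ < w
      else ε + r - 2 - v = k * (w + 1) + δ ∧ 0 ≤ δ ∧ δ < w + 1)
    (hR : R = ((1 + (ε : ℚ)) / (2 * s)) * ((s : ℚ) + 1 - ε - 2 * G)
        + (w : ℚ) * (ε - δ) - (k : ℚ) * ((w : ℚ) * (w + 1) / 2)
        + (δ : ℚ) * (δ - 1) / 2) :
    |R| ≤ (s : ℚ) ^ 3 / (r - 2) := by
  have hr2 : (1:ℤ) ≤ r - 2 := by linarith
  have hs2 : (2:ℤ) ≤ s := by linarith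
  have hr2s : r - 2 ≤ s - 1 := by linarith
  have hw1 : (1:ℤ) ≤ w := by nlinarith
  have hwr : w * (r - 2) ≤ s - 1 := by linarith
  have hws : w ≤ s - 1 := by nlinarith
  have hG2eq : w * (w - 1) * (r - 2) + 2 * (w * v) = w * (s + v - r + 1) := by
    linear_combination (-w) * hwv
  have hG20 : (0:ℤ) ≤ w * (w - 1) * (r - 2) + 2 * (w * v) := by
    rw [hG2eq]; exact mul_nonneg (by linarith) (by linarith)
  have hG2le : w * (w - 1) * (r - 2) + 2 * (w * v) ≤ (s - 1) * (s - 2) := by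
    rw [hG2eq]; nlinarith
  have hmain : -(2 * s ^ 4) ≤ (r - 2) * ((1 + ε) * (s + 1 - ε - (w * (w - 1) * (r - 2) + 2 * (w * v))))
        + 2 * s * ((r - 2) * (w * (ε - δ))) - s * ((r - 2) * (k * (w * (w + 1))))
        + s * ((r - 2) * (δ * (δ - 1)))
      ∧ (r - 2) * ((1 + ε) * (s + 1 - ε - (w * (w - 1) * (r - 2) + 2 * (w * v))))
        + 2 * s * ((r - 2) * (w * (ε - δ))) - s * ((r - 2) * (k * (w * (w + 1))))
        + s * ((r - 2) * (δ * (δ - 1))) ≤ 2 * s ^ 4 := by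
    by_cases hc : ε < w * (r - 1 - v)
    · rw [if_pos hc] at hkδ
      obtain ⟨hk, hδ0, hδ1⟩ := hkδ
      have hk0 : 0 ≤ k := by nlinarith
      have hkw0 : 0 ≤ k * w := mul_nonneg hk0 (by linarith)
      have hkws : k * w ≤ s - 1 := by linarith
      have h5 : (r - 2) * (w + 1) ≤ 2 * (s - 1) := by linarith
      have hCu : (r - 2) * (k * (w * (w + 1))) ≤ 2 * ((s - 1) * (s - 1)) := by
        nlinarith [mul_le_mul hkws h5 (by nlinarith : (0:ℤ) ≤ (r - 2) * (w + 1))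
          (by linarith : (0:ℤ) ≤ s - 1)]
      have hC0 : 0 ≤ k * (w * (w + 1)) :=
        mul_nonneg hk0 (mul_nonneg (by linarith) (by linarith))
      exact aux_bound r s ε w v k δ hr2 hs2 hr2s hε0 hε1 hw1 hwr hws hG20 hG2le
        hδ0 (by linarith) hC0 hCu (by linarith)
    · rw [if_neg hc] at hkδ
      obtain ⟨hk, hδ0, hδ1⟩ := hkδ
      have hk0 : 0 ≤ k := by nlinarith
      have hkw0 : 0 ≤ k * (w + 1) := mul_nonneg hk0 (by linarith)
      have hkw1 : k * (w + 1) ≤ 2 * (s - 1) := by linarith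
      have hCu : (r - 2) * (k * (w * (w + 1))) ≤ 2 * ((s - 1) * (s - 1)) := by
        nlinarith [mul_le_mul hwr hkw1 hkw0 (by linarith : (0:ℤ) ≤ s - 1)]
      have hC0 : 0 ≤ k * (w * (w + 1)) := by nlinarith
      exact aux_bound r s ε w v k δ hr2 hs2 hr2s hε0 hε1 hw1 hwr hws hG20 hG2le
        hδ0 (by linarith) hC0 hCu (by linarith)
  obtain ⟨hPl, hPu⟩ := hmain
  set P : ℤ := (r - 2) * ((1 + ε) * (s + 1 - ε - (w * (w - 1) * (r - 2) + 2 * (w * v))))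
        + 2 * s * ((r - 2) * (w * (ε - δ))) - s * ((r - 2) * (k * (w * (w + 1))))
        + s * ((r - 2) * (δ * (δ - 1))) with hPdef
  have hs0 : (0:ℚ) < (s : ℚ) := by exact_mod_cast (by linarith : (0:ℤ) < s)
  have hr0 : (0:ℚ) < (r : ℚ) - 2 := by
    have h : (0:ℤ) < r - 2 := by linarith
    exact_mod_cast h
  have hRP : R = (P : ℚ) / (2 * s * ((r : ℚ) - 2)) := by
    have hsne : (s:ℚ) ≠ 0 := ne_of_gt hs0
    have hrne : (r:ℚ) - 2 ≠ 0 := ne_of_gt hr0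
    rw [hR, hG, hPdef]
    push_cast
    field_simp
  have habsq : |(P : ℚ)| ≤ 2 * (s : ℚ) ^ 4 := by
    have h : |P| ≤ 2 * s ^ 4 := abs_le.2 ⟨hPl, hPu⟩
    exact_mod_cast h
  rw [hRP, abs_div, abs_of_pos (by positivity : (0:ℚ) < 2 * s * ((r:ℚ) - 2))]
  rw [div_le_div_iff₀ (by positivity) hr0]
  nlinarith [mul_le_mul_of_nonneg_right habsq (le_of_lt hr0), abs_nonneg ((P:ℚ)),
    mul_pos hs0 hr0]
end

section
/- With r, d, s, ε, w, v, G as in the context, the rational number (d + 2G - 2 - s)/s is an integer (equivalently, s divides d + 2G - 2 - s) if and only if either (v = 0 and ε = w) or (v ≥ 1 and ε = w(r-1-v) + 1). (This is the integrality analysis of the speciality bound d/s + (2G-2-s)/s in the proof of Proposition 2.) -/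
/-- `(d + 2G - 2 - s)/s` is an integer (i.e. `s ∣ d + 2G - 2 - s`)
iff either `v = 0 ∧ ε = w` or `v ≥ 1 ∧ ε = w(r-1-v) + 1`. -/
theorem stmt_1 (r d s m ε w v G : ℤ)
    (hr : 2 ≤ r - 1) (hs : r - 1 ≤ s)
    (hdiv : d - 1 = m * s + ε) (hε0 : 0 ≤ ε) (hε1 : ε ≤ s - 1)
    (hwv : s - 1 = w * (r - 2) + v) (hv0 : 0 ≤ v) (hv1 : v ≤ r - 3)
    (hG : (G : ℚ) = (w : ℚ) * (w - 1) / 2 * (r - 2) + (w : ℚ) * v) :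
    s ∣ d + 2 * G - 2 - s ↔
      (v = 0 ∧ ε = w) ∨ (1 ≤ v ∧ ε = w * (r - 1 - v) + 1) := by
  -- w ≥ 1
  have hw1 : 1 ≤ w := by nlinarith
  -- integer version of the genus formula
  have h2G : 2 * G = w * (w - 1) * (r - 2) + 2 * w * v := by
    have h : ((2 * G : ℤ) : ℚ) = ((w * (w - 1) * (r - 2) + 2 * w * v : ℤ) : ℚ) := by
      push_cast
      linear_combination 2 * hG
    exact_mod_cast h
  have hrw : d + 2 * G - 2 - s = s * (m + w - 2) + (ε + v * (w + 1) - w) := by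
    linear_combination hdiv + h2G + (1 - w) * hwv
  have hiff : (s ∣ d + 2 * G - 2 - s) ↔ s ∣ (ε + v * (w + 1) - w) := by
    rw [hrw]
    exact dvd_add_right (dvd_mul_right s (m + w - 2))
  rw [hiff]
  have hvw : v * w ≤ (r - 3) * w := mul_le_mul_of_nonneg_right hv1 (by linarith)
  have hvw0 : 0 ≤ v * (w + 1) := mul_nonneg hv0 (by linarith)
  have hws : w ≤ s - 1 := by nlinarith
  constructor
  · rintro ⟨k, hk⟩
    have hk0 : -1 < k := by nlinarith
    have hk2 : k < 2 := by nlinarith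
    interval_cases k
    · -- X = 0
      have hv : v = 0 := by nlinarith [mul_nonneg hv0 (by linarith : (0:ℤ) ≤ w + 1)]
      subst hv
      exact Or.inl ⟨rfl, by linarith [hk]⟩
    · -- X = s
      have hv : 1 ≤ v := by nlinarith
      exact Or.inr ⟨hv, by linear_combination hk + hwv⟩
  · rintro (⟨hv, hε⟩ | ⟨hv, hε⟩)
    · exact ⟨0, by subst hv; subst hε; ring⟩
    · exact ⟨1, by subst hε; linear_combination -hwv⟩
end

section
/- With r, d, s, ε, w, v, G, k, δ, R as in the context, if either (v = 0 and ε = w) or (v ≥ 1 and ε = w(r-1-v) + 1), then R = 1. (This is the computation in the proof of Proposition 2 showing that in the two integrality cases the correction term in the maximal-genus formula equals 1.) -/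
/-- if either `(v = 0 ∧ ε = w)` or `(v ≥ 1 ∧ ε = w(r-1-v) + 1)`,
then `R = 1`. -/
theorem stmt_3 (r d s m ε w v G k δ : ℤ) (R : ℚ)
    (hr : 2 ≤ r - 1) (hs : r - 1 ≤ s)
    (hdiv : d - 1 = m * s + ε) (hε0 : 0 ≤ ε) (hε1 : ε ≤ s - 1)
    (hwv : s - 1 = w * (r - 2) + v) (hv0 : 0 ≤ v) (hv1 : v ≤ r - 3)
    (hG : (G : ℚ) = (w : ℚ) * (w - 1) / 2 * (r - 2) + (w : ℚ) * v)
    (hkδ : if ε < w * (r - 1 - v)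
      then ε = k * w + δ ∧ 0 ≤ δ ∧ δ < w
      else ε + r - 2 - v = k * (w + 1) + δ ∧ 0 ≤ δ ∧ δ < w + 1)
    (hR : R = ((1 + (ε : ℚ)) / (2 * s)) * ((s : ℚ) + 1 - ε - 2 * G)
        + (w : ℚ) * (ε - δ) - (k : ℚ) * ((w : ℚ) * (w + 1) / 2)
        + (δ : ℚ) * (δ - 1) / 2)
    (hcase : (v = 0 ∧ ε = w) ∨ (1 ≤ v ∧ ε = w * (r - 1 - v) + 1)) :
    R = 1 := by
  have hw1 : 1 ≤ w := by nlinarith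
  have hspos : (0:ℤ) < s := by linarith
  have hsQ : ((s:ℚ)) ≠ 0 := by
    exact_mod_cast (ne_of_gt hspos)
  have hsQ2 : (s:ℚ) = (w:ℚ) * (r - 2) + v + 1 := by
    have : (s:ℤ) = w * (r-2) + v + 1 := by linarith
    exact_mod_cast this
  rcases hcase with ⟨hv, he⟩ | ⟨hv, he⟩
  · -- case v = 0, ε = w
    have hlt : ε < w * (r - 1 - v) := by
      subst hv he
      nlinarith
    rw [if_pos hlt] at hkδ
    obtain ⟨h1, h2, h3⟩ := hkδ
    -- ε = w, so w = k*w + δ, 0 ≤ δ < w ⇒ k = 1, δ = 0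
    have hk : k = 1 := by nlinarith
    have hδ : δ = 0 := by nlinarith
    subst hk hδ hv he
    have key : ((s:ℚ) + 1 - ε - 2 * G) = (2 - (ε:ℚ)) * s := by
      rw [hG, hsQ2]; push_cast; ring
    have key2 : (1 + (ε:ℚ)) / (2 * s) * ((2 - (ε:ℚ)) * s)
        = (1 + (ε:ℚ)) * (2 - ε) / 2 := by
      field_simp
    rw [hR, key, key2]; push_cast; ring
  · -- case v ≥ 1, ε = w(r-1-v)+1
    have hlt : ¬ (ε < w * (r - 1 - v)) := by
      subst he; omega
    rw [if_neg hlt] at hkδ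
    obtain ⟨h1, h2, h3⟩ := hkδ
    have h1' : (w + 1) * (r - 1 - v) = k * (w + 1) + δ := by
      rw [← h1, he]; ring
    have hk : k = r - 1 - v := by nlinarith
    have hδ : δ = 0 := by nlinarith
    subst hδ
    have heQ : ((ε : ℤ) : ℚ) = (w:ℚ) * ((r:ℚ) - 1 - v) + 1 := by
      rw [he]; push_cast; ring
    have hkQ : ((k : ℤ) : ℚ) = (r:ℚ) - 1 - v := by
      rw [hk]; push_cast; ring
    have key : ((s:ℚ) + 1 - ε - 2 * G) = (1 - (w:ℚ)) * s := by
      rw [hG, hsQ2, heQ]; ring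
    have key2 : (1 + (ε:ℚ)) / (2 * s) * ((1 - (w:ℚ)) * s)
        = (1 + (ε:ℚ)) * (1 - w) / 2 := by
      field_simp
    rw [hR, key, key2, heQ, hkQ]; push_cast; ring
end

section
/- With r, d, s, ε, w, v, G, k, δ, R as in the context, if ε = s - 1 then R = 1. (This is the claim of Remark (iii): as soon as ε = s-1, the correction term R in the maximal-genus formula equals 1; it shows that R = 1 alone does not force maximal speciality.) -/
/-- if `ε = s - 1` then `R = 1` (Remark (iii)). -/
theorem stmt_4 (r d s m ε w v G k δ : ℤ) (R : ℚ)
    (hr : 2 ≤ r - 1) (hs : r - 1 ≤ s)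
    (hdiv : d - 1 = m * s + ε) (hε0 : 0 ≤ ε) (hε1 : ε ≤ s - 1)
    (hwv : s - 1 = w * (r - 2) + v) (hv0 : 0 ≤ v) (hv1 : v ≤ r - 3)
    (hG : (G : ℚ) = (w : ℚ) * (w - 1) / 2 * (r - 2) + (w : ℚ) * v)
    (hkδ : if ε < w * (r - 1 - v)
      then ε = k * w + δ ∧ 0 ≤ δ ∧ δ < w
      else ε + r - 2 - v = k * (w + 1) + δ ∧ 0 ≤ δ ∧ δ < w + 1)
    (hR : R = ((1 + (ε : ℚ)) / (2 * s)) * ((s : ℚ) + 1 - ε - 2 * G)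
        + (w : ℚ) * (ε - δ) - (k : ℚ) * ((w : ℚ) * (w + 1) / 2)
        + (δ : ℚ) * (δ - 1) / 2)
    (hε : ε = s - 1) :
    R = 1 := by
  -- w ≥ 1
  have hw1 : 1 ≤ w := by nlinarith
  -- In both cases, k = r - 2 and δ = 0
  have hkd : k = r - 2 ∧ δ = 0 := by
    split_ifs at hkδ with hc
    · obtain ⟨h1, h2, h3⟩ := hkδ
      -- ε = s - 1 = w*(r-2) + v, and ε < w*(r-1-v) forces v = 0
      have hveq : v = 0 := by nlinarith
      have hε' : ε = w * (r - 2) := by rw [hε, hwv, hveq]; ring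
      have hd : (r - 2 - k) * w = δ := by linear_combination h1 - hε'
      have hk0 : r - 2 - k = 0 := by
        rcases lt_trichotomy (r - 2 - k) 0 with h | h | h
        · nlinarith
        · exact h
        · nlinarith
      exact ⟨by omega, by linear_combination w * hk0 - hd⟩
    · obtain ⟨h1, h2, h3⟩ := hkδ
      have hε' : ε + r - 2 - v = (w + 1) * (r - 2) := by
        rw [hε, hwv]; ring
      have hd : (r - 2 - k) * (w + 1) = δ := by linear_combination h1 - hε'
      have hk0 : r - 2 - k = 0 := by
        rcases lt_trichotomy (r - 2 - k) 0 with h | h | h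
        · nlinarith
        · exact h
        · nlinarith
      exact ⟨by omega, by linear_combination (w + 1) * hk0 - hd⟩
  obtain ⟨hk, hd⟩ := hkd
  subst hk hd hε
  have hs0 : (s : ℚ) ≠ 0 := by
    have : (2 : ℚ) ≤ s := by exact_mod_cast (by linarith : (2:ℤ) ≤ s)
    linarith
  have hwvq : (s : ℚ) - 1 = (w : ℚ) * ((r : ℚ) - 2) + v := by
    exact_mod_cast hwv
  rw [hR, hG]
  push_cast
  have key : (1 + ((s : ℚ) - 1)) / (2 * (s : ℚ)) = 1 / 2 := by
    field_simp
    ring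
  rw [key]
  linear_combination (w : ℚ) * hwvq
end

section
/- With r, d, s, ε, w, v, G, k, δ, R as in the context, if s divides d + 2G - 2 - s (equivalently, if the speciality bound d/s + (2G-2-s)/s is an integer), then R = 1. (This combines the integrality analysis and the case computation from the proof of Proposition 2.) -/
/-- Euclidean-division style uniqueness helper: if `0 ≤ s*n + a ≤ s-1`
with `0 ≤ a ≤ s-1` and `0 < s`, then `n = 0`. -/
lemma stmt5_aux (s n a : ℤ) (hs : 0 < s) (h0 : 0 ≤ a) (h1 : a ≤ s - 1)
    (e0 : 0 ≤ s * n + a) (e1 : s * n + a ≤ s - 1) : n = 0 := by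
  rcases lt_trichotomy n 0 with h | h | h
  · exfalso
    have hle : s * n ≤ s * (-1) := by
      apply mul_le_mul_of_nonneg_left (by omega) hs.le
    nlinarith
  · exact h
  · exfalso
    have hle : s * 1 ≤ s * n := by
      apply mul_le_mul_of_nonneg_left (by omega) hs.le
    nlinarith

/-- if `s ∣ d + 2G - 2 - s` (i.e. the speciality bound
`d/s + (2G-2-s)/s` is an integer), then `R = 1`. -/
theorem stmt_5 (r d s m ε w v G k δ : ℤ) (R : ℚ)
    (hr : 2 ≤ r - 1) (hs : r - 1 ≤ s)
    (hdiv : d - 1 = m * s + ε) (hε0 : 0 ≤ ε) (hε1 : ε ≤ s - 1)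
    (hwv : s - 1 = w * (r - 2) + v) (hv0 : 0 ≤ v) (hv1 : v ≤ r - 3)
    (hG : (G : ℚ) = (w : ℚ) * (w - 1) / 2 * (r - 2) + (w : ℚ) * v)
    (hkδ : if ε < w * (r - 1 - v)
      then ε = k * w + δ ∧ 0 ≤ δ ∧ δ < w
      else ε + r - 2 - v = k * (w + 1) + δ ∧ 0 ≤ δ ∧ δ < w + 1)
    (hR : R = ((1 + (ε : ℚ)) / (2 * s)) * ((s : ℚ) + 1 - ε - 2 * G)
        + (w : ℚ) * (ε - δ) - (k : ℚ) * ((w : ℚ) * (w + 1) / 2)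
        + (δ : ℚ) * (δ - 1) / 2)
    (hdvd : s ∣ d + 2 * G - 2 - s) :
    R = 1 := by
  have hs0 : 0 < s := by omega
  have hsQ : (s : ℚ) ≠ 0 := by exact_mod_cast hs0.ne'
  -- w ≥ 1
  have hprod : 1 ≤ w * (r - 2) := by linarith
  have hw1 : 1 ≤ w := by
    by_contra h
    push_neg at h
    have : w * (r - 2) ≤ 0 * (r - 2) :=
      mul_le_mul_of_nonneg_right (by omega) (by omega)
    nlinarith
  have hwle : w ≤ s - 1 := by
    have : w * 1 ≤ w * (r - 2) := mul_le_mul_of_nonneg_left (by omega) (by omega)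
    linarith
  -- integral form of 2G
  have h2G' : 2 * G = w * (w - 1) * (r - 2) + 2 * w * v := by
    have hq : ((2 * G : ℤ) : ℚ) = ((w * (w - 1) * (r - 2) + 2 * w * v : ℤ) : ℚ) := by
      push_cast
      linear_combination 2 * hG
    exact_mod_cast hq
  have h2Gs : 2 * G = (w - 1) * (s - 1) + (w + 1) * v := by
    linear_combination h2G' - (w - 1) * hwv
  -- divisibility gives ε + 2G - 1 = s * c2
  obtain ⟨c, hc⟩ := hdvd
  obtain ⟨c2, hc2⟩ : ∃ c2 : ℤ, ε + 2 * G - 1 = s * c2 :=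
    ⟨c - m + 1, by linear_combination hc - hdiv⟩
  have hGQ : 2 * (G : ℚ) = ((w : ℚ) - 1) * ((s : ℚ) - 1) + ((w : ℚ) + 1) * v := by
    exact_mod_cast congrArg (fun x : ℤ => (x : ℚ)) h2Gs
  have hwvQ : (s : ℚ) - 1 = (w : ℚ) * ((r : ℚ) - 2) + v := by
    exact_mod_cast congrArg (fun x : ℤ => (x : ℚ)) hwv
  rcases eq_or_lt_of_le hv0 with hv | hv
  · -- case v = 0
    have hve : v = 0 := hv.symm
    subst hve
    have hε : ε = s * (c2 - w + 1) + w := by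
      linear_combination hc2 - h2Gs
    have hn : c2 - w + 1 = 0 := by
      apply stmt5_aux s _ w hs0 (by omega) hwle <;> omega
    rw [hn, mul_zero, zero_add] at hε
    have hεw : ε = w := hε
    have hcond : ε < w * (r - 1 - 0) := by
      have : w * (r - 1 - 0) = w * (r - 2) + w := by ring
      omega
    rw [if_pos hcond] at hkδ
    obtain ⟨h1, h2, h3⟩ := hkδ
    have h00 : w * (k - 1) + δ = 0 := by linear_combination hεw - h1
    have hk1 : k - 1 = 0 :=
      stmt5_aux w (k - 1) δ (by omega) h2 (by omega) (by linarith) (by linarith)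
    have hδ0 : δ = 0 := by rw [hk1, mul_zero, zero_add] at h00; exact h00
    have hεQ : (ε : ℚ) = (w : ℚ) := by exact_mod_cast congrArg (fun x : ℤ => (x : ℚ)) hεw
    have hkQ : (k : ℚ) = 1 := by exact_mod_cast congrArg (fun x : ℤ => (x : ℚ)) (by omega : k = 1)
    have hδQ : (δ : ℚ) = 0 := by exact_mod_cast congrArg (fun x : ℤ => (x : ℚ)) hδ0
    have key : (s : ℚ) + 1 - ε - 2 * G = (2 - (w : ℚ)) * s := by
      linear_combination -hGQ - hεQ
    rw [hR, key, hεQ, hkQ, hδQ]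
    field_simp
    ring
  · -- case v ≥ 1
    have hε : ε = s * (c2 - w) + (w * (r - 1 - v) + 1) := by
      linear_combination hc2 - h2Gs + hwv
    have ha0 : 0 ≤ w * (r - 1 - v) + 1 := by
      have : 0 * (r - 1 - v) ≤ w * (r - 1 - v) :=
        mul_le_mul_of_nonneg_right (by omega) (by omega)
      omega
    have hid : w * (r - 2) - w * (r - 1 - v) = w * (v - 1) := by ring
    have hnn : 0 ≤ w * (v - 1) := mul_nonneg (by omega) (by omega)
    have ha1 : w * (r - 1 - v) + 1 ≤ s - 1 := by omega
    have hn : c2 - w = 0 := by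
      apply stmt5_aux s _ (w * (r - 1 - v) + 1) hs0 ha0 ha1 <;> omega
    rw [hn, mul_zero, zero_add] at hε
    have hεv : ε = w * (r - 1 - v) + 1 := hε
    have hcond : ¬ (ε < w * (r - 1 - v)) := by omega
    rw [if_neg hcond] at hkδ
    obtain ⟨h1, h2, h3⟩ := hkδ
    have h00 : (w + 1) * (k - (r - 1 - v)) + δ = 0 := by linear_combination hεv - h1
    have hk1 : k - (r - 1 - v) = 0 :=
      stmt5_aux (w + 1) (k - (r - 1 - v)) δ (by omega) h2 (by omega)
        (by linarith) (by linarith)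
    have hδ0 : δ = 0 := by rw [hk1, mul_zero, zero_add] at h00; exact h00
    have hεQ : (ε : ℚ) = (w : ℚ) * ((r : ℚ) - 1 - v) + 1 := by
      exact_mod_cast congrArg (fun x : ℤ => (x : ℚ)) hεv
    have hkQ : (k : ℚ) = (r : ℚ) - 1 - v := by
      exact_mod_cast congrArg (fun x : ℤ => (x : ℚ)) (by omega : k = r - 1 - v)
    have hδQ : (δ : ℚ) = 0 := by exact_mod_cast congrArg (fun x : ℤ => (x : ℚ)) hδ0
    have key : (s : ℚ) + 1 - ε - 2 * G = (1 - (w : ℚ)) * s := by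
      linear_combination -hεQ - hGQ + hwvQ
    rw [hR, key, hεQ, hkQ, hδQ]
    field_simp
    ring
end

section
/- With r, d, s, G as in the context, assume d > 2s⁴/(r-2). Let e and p be integers (playing the role of the speciality index e(C) and the arithmetic genus p_a(C) of a curve C), and let R' be any rational number with |R'| ≤ s³/(r-2). If e·d ≤ 2p - 2 and p ≤ d²/(2s) + (d/(2s))·(2G - 2 - s) + R', then e ≤ (d + 2G - 2 - s)/s, i.e. e·s ≤ d + 2G - 2 - s. (This is the numerical derivation of the speciality bound (5) of Proposition 2 from the genus bound G(r;d,s) and the inequality deg(C)·e(C) ≤ 2p_a(C) - 2.) -/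
/-- derivation of the speciality bound (5) of Proposition 2:
if `d > 2s⁴/(r-2)`, `|R'| ≤ s³/(r-2)`, `e·d ≤ 2p - 2` and
`p ≤ d²/(2s) + (d/(2s))(2G-2-s) + R'`, then `e·s ≤ d + 2G - 2 - s`. -/
theorem stmt_6 (r d s m ε w v G e p : ℤ) (R' : ℚ)
    (hr : 2 ≤ r - 1) (hs : r - 1 ≤ s)
    (hdiv : d - 1 = m * s + ε) (hε0 : 0 ≤ ε) (hε1 : ε ≤ s - 1)
    (hwv : s - 1 = w * (r - 2) + v) (hv0 : 0 ≤ v) (hv1 : v ≤ r - 3)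
    (hG : (G : ℚ) = (w : ℚ) * (w - 1) / 2 * (r - 2) + (w : ℚ) * v)
    (hd : (d : ℚ) > 2 * (s : ℚ) ^ 4 / (r - 2))
    (hR' : |R'| ≤ (s : ℚ) ^ 3 / (r - 2))
    (hep : e * d ≤ 2 * p - 2)
    (hp : (p : ℚ) ≤ (d : ℚ) ^ 2 / (2 * s)
        + ((d : ℚ) / (2 * s)) * (2 * G - 2 - s) + R') :
    e * s ≤ d + 2 * G - 2 - s := by
  have hs3 : (2:ℤ) ≤ s := by omega
  have hr2 : (1:ℤ) ≤ r - 2 := by omega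
  have hsQ : (0:ℚ) < (s:ℚ) := by
    have : (2:ℚ) ≤ (s:ℚ) := by exact_mod_cast hs3
    linarith
  have hrQ : (0:ℚ) < (r:ℚ) - 2 := by
    have : (1:ℚ) ≤ (r:ℚ) - 2 := by exact_mod_cast hr2
    linarith
  have hdQ : (0:ℚ) < (d:ℚ) := by
    have h0 : (0:ℚ) ≤ 2*(s:ℚ)^4/((r:ℚ)-2) := div_nonneg (by positivity) hrQ.le
    linarith
  have hRb : R' * ((r:ℚ)-2) ≤ (s:ℚ)^3 := by
    have h1 : R' ≤ (s:ℚ)^3/((r:ℚ)-2) := le_trans (le_abs_self R') hR'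
    calc R' * ((r:ℚ)-2) ≤ ((s:ℚ)^3/((r:ℚ)-2)) * ((r:ℚ)-2) :=
          mul_le_mul_of_nonneg_right h1 hrQ.le
      _ = (s:ℚ)^3 := div_mul_cancel₀ _ (ne_of_gt hrQ)
  have hdb : 2*(s:ℚ)^4 < (d:ℚ) * ((r:ℚ)-2) := by
    have := (div_lt_iff₀ hrQ).mp hd
    linarith
  have hsR : 2*(s:ℚ)*R' < (d:ℚ) := by
    have h1 : 2*(s:ℚ)*R'*((r:ℚ)-2) ≤ 2*(s:ℚ)*((s:ℚ)^3) := by nlinarith [hRb, hsQ]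
    nlinarith [h1, hdb, hrQ]
  have hp2 : 2*(s:ℚ)*(p:ℚ) ≤ (d:ℚ)^2 + (d:ℚ)*(2*(G:ℚ)-2-(s:ℚ)) + 2*(s:ℚ)*R' := by
    have h2 := mul_le_mul_of_nonneg_left hp (by linarith : (0:ℚ) ≤ 2*(s:ℚ))
    have e1 : 2*(s:ℚ) * ((d:ℚ)^2/(2*(s:ℚ))) = (d:ℚ)^2 := by field_simp
    have e2 : 2*(s:ℚ) * ((d:ℚ)/(2*(s:ℚ)) * (2*(G:ℚ)-2-(s:ℚ)))
        = (d:ℚ)*(2*(G:ℚ)-2-(s:ℚ)) := by field_simp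
    rw [mul_add, mul_add, e1, e2] at h2
    linarith
  have hepQ : (e:ℚ)*(d:ℚ) ≤ 2*(p:ℚ) - 2 := by exact_mod_cast hep
  by_contra hcon
  push_neg at hcon
  have hZ : d + 2*G - 2 - s + 1 ≤ e*s := Int.lt_iff_add_one_le.mp hcon
  have hconQ : (d:ℚ) + 2*(G:ℚ) - 2 - (s:ℚ) + 1 ≤ (e:ℚ)*(s:ℚ) := by exact_mod_cast hZ
  nlinarith [mul_le_mul_of_nonneg_right hepQ hsQ.le,
    mul_le_mul_of_nonneg_left hconQ hdQ.le, hp2, hsR, hsQ, hdQ]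
end

section
/- With r, d, s, ε, w, v, G, k, δ, R as in the context, let e and p be integers (playing the role of the speciality index and the arithmetic genus of a curve) such that e·s = d + 2G - 2 - s (i.e. e equals the speciality bound d/s + (2G-2-s)/s, which is in particular an integer), e·d ≤ 2p - 2, and p ≤ d²/(2s) + (d/(2s))·(2G - 2 - s) + R. Then: (a) either (v = 0 and ε = w) or (v ≥ 1 and ε = w(r-1-v)+1); (b) R = 1; and (c) 2p - 2 = d·(d + 2G - 2 - s)/s, i.e. p attains the maximal value d²/(2s) + (d/(2s))(2G-2-s) + 1. (This is the numerical content of the implication (i) ⇒ (ii) in Proposition 2.) -/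
set_option maxHeartbeats 1000000


/-- numerical content of (i) ⇒ (ii) in Proposition 2: if
`e·s = d + 2G - 2 - s`, `e·d ≤ 2p - 2` and
`p ≤ d²/(2s) + (d/(2s))(2G-2-s) + R`, then (a) either `(v = 0 ∧ ε = w)` or
`(v ≥ 1 ∧ ε = w(r-1-v)+1)`; (b) `R = 1`; (c) `2p - 2 = d(d+2G-2-s)/s`. -/
theorem stmt_7 (r d s m ε w v G k δ e p : ℤ) (R : ℚ)
    (hr : 2 ≤ r - 1) (hs : r - 1 ≤ s)
    (hdiv : d - 1 = m * s + ε) (hε0 : 0 ≤ ε) (hε1 : ε ≤ s - 1)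
    (hwv : s - 1 = w * (r - 2) + v) (hv0 : 0 ≤ v) (hv1 : v ≤ r - 3)
    (hG : (G : ℚ) = (w : ℚ) * (w - 1) / 2 * (r - 2) + (w : ℚ) * v)
    (hkδ : if ε < w * (r - 1 - v)
      then ε = k * w + δ ∧ 0 ≤ δ ∧ δ < w
      else ε + r - 2 - v = k * (w + 1) + δ ∧ 0 ≤ δ ∧ δ < w + 1)
    (hR : R = ((1 + (ε : ℚ)) / (2 * s)) * ((s : ℚ) + 1 - ε - 2 * G)
        + (w : ℚ) * (ε - δ) - (k : ℚ) * ((w : ℚ) * (w + 1) / 2)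
        + (δ : ℚ) * (δ - 1) / 2)
    (he : e * s = d + 2 * G - 2 - s)
    (hep : e * d ≤ 2 * p - 2)
    (hp : (p : ℚ) ≤ (d : ℚ) ^ 2 / (2 * s)
        + ((d : ℚ) / (2 * s)) * (2 * G - 2 - s) + R) :
    ((v = 0 ∧ ε = w) ∨ (1 ≤ v ∧ ε = w * (r - 1 - v) + 1)) ∧
    R = 1 ∧
    ((2 * p - 2 : ℚ) = (d : ℚ) * ((d : ℚ) + 2 * G - 2 - s) / s) := by
  -- basic bounds
  have hρ : (1 : ℤ) ≤ r - 2 := by linarith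
  have hs2 : (2 : ℤ) ≤ s := by linarith
  have hw1 : (1 : ℤ) ≤ w := by
    by_contra h
    push_neg at h
    have hw0 : w ≤ 0 := by linarith
    have := mul_nonpos_of_nonpos_of_nonneg hw0 (by linarith : (0:ℤ) ≤ r - 2)
    linarith
  -- 2G as an integer identity
  have g2 : 2 * G = w * (w - 1) * (r - 2) + 2 * w * v := by
    have h : ((2 * G : ℤ) : ℚ) = ((w * (w - 1) * (r - 2) + 2 * w * v : ℤ) : ℚ) := by
      push_cast
      linear_combination 2 * hG
    exact_mod_cast h
  -- divisibility: ε - 1 + 2G = (e - m + 1) * s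
  have hc : ε - 1 + 2 * G = (e - m + 1) * s := by linear_combination -he - hdiv
  -- determine ε, k, δ by cases on v
  have main : ((v = 0 ∧ ε = w) ∨ (1 ≤ v ∧ ε = w * (r - 1 - v) + 1)) ∧ R = 1 := by
    rcases hv0.eq_or_lt with hv | hv
    · -- v = 0
      subst hv
      have key : ε - w = (e - m + 1 - (w - 1)) * s := by
        linear_combination hc - g2 + (w - 1) * hwv
      have hwle : w ≤ s - 1 := by
        have h1 : w * 1 ≤ w * (r - 2) := by
          apply mul_le_mul_of_nonneg_left hρ (by linarith)
        linarith
      have hc0 : e - m + 1 - (w - 1) = 0 := by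
        rcases lt_trichotomy (e - m + 1 - (w - 1)) 0 with h | h | h
        · exfalso
          have h1 : e - m + 1 - (w - 1) ≤ -1 := by linarith
          have h2 : (e - m + 1 - (w - 1)) * s ≤ (-1) * s :=
            mul_le_mul_of_nonneg_right h1 (by linarith)
          linarith
        · exact h
        · exfalso
          have h1 : (1:ℤ) ≤ e - m + 1 - (w - 1) := h
          have h2 : 1 * s ≤ (e - m + 1 - (w - 1)) * s :=
            mul_le_mul_of_nonneg_right h1 (by linarith)
          linarith
      have hεw : ε = w := by linear_combination key + s * hc0
      -- the if condition holds: ε < w * (r - 1 - 0)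
      have hpos : 0 < w * (r - 2) := mul_pos (by linarith) (by linarith)
      have hcond : ε < w * (r - 1 - 0) := by nlinarith
      rw [if_pos hcond] at hkδ
      obtain ⟨h1, h2, h3⟩ := hkδ
      -- from w = k * w + δ, 0 ≤ δ < w: k = 1, δ = 0
      have hk1 : k = 1 := by
        rcases lt_trichotomy k 1 with h | h | h
        · exfalso
          have : k ≤ 0 := by linarith
          have := mul_le_mul_of_nonneg_right this (by linarith : (0:ℤ) ≤ w)
          linarith
        · exact h
        · exfalso
          have : (2:ℤ) ≤ k := by linarith
          have := mul_le_mul_of_nonneg_right this (by linarith : (0:ℤ) ≤ w)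
          linarith
      have hδ0 : δ = 0 := by
        rw [hk1] at h1; linarith
      refine ⟨Or.inl ⟨rfl, hεw⟩, ?_⟩
      -- R = 1
      have hεQ : (ε : ℚ) = w := by exact_mod_cast hεw
      have hδQ : (δ : ℚ) = 0 := by exact_mod_cast hδ0
      have hkQ : (k : ℚ) = 1 := by exact_mod_cast hk1
      have hsQ : (s : ℚ) = (w : ℚ) * ((r : ℚ) - 2) + 1 := by
        have : ((s : ℤ) : ℚ) - 1 = ((w * (r - 2) + 0 : ℤ) : ℚ) := by
          exact_mod_cast congrArg (fun x : ℤ => (x : ℚ)) hwv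
        push_cast at this
        linarith
      have hsne : ((w : ℚ) * ((r : ℚ) - 2) + 1) ≠ 0 := by
        rw [← hsQ]
        have : (0:ℚ) < s := by exact_mod_cast (by linarith : (0:ℤ) < s)
        linarith
      rw [hR, hεQ, hδQ, hkQ, hG, hsQ]
      push_cast
      field_simp [hsne]
      ring
    · -- 1 ≤ v
      have hv1' : (1:ℤ) ≤ v := hv
      have key : ε - (w * (r - 1 - v) + 1) = (e - m + 1 - w) * s := by
        linear_combination hc - g2 + w * hwv
      have hlb : 0 ≤ w * (r - 1 - v) := mul_nonneg (by linarith) (by linarith)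
      have hub : w * (r - 1 - v) + 1 ≤ s - 1 := by
        have hex : w * (r - 1 - v) + 1 + (v - 1) * (w + 1) = s - 1 := by
          linear_combination -hwv
        have : 0 ≤ (v - 1) * (w + 1) := mul_nonneg (by linarith) (by linarith)
        linarith
      have hc0 : e - m + 1 - w = 0 := by
        rcases lt_trichotomy (e - m + 1 - w) 0 with h | h | h
        · exfalso
          have h1 : e - m + 1 - w ≤ -1 := by linarith
          have h2 : (e - m + 1 - w) * s ≤ (-1) * s :=
            mul_le_mul_of_nonneg_right h1 (by linarith)
          linarith
        · exact h
        · exfalso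
          have h1 : (1:ℤ) ≤ e - m + 1 - w := h
          have h2 : 1 * s ≤ (e - m + 1 - w) * s :=
            mul_le_mul_of_nonneg_right h1 (by linarith)
          linarith
      have hεv : ε = w * (r - 1 - v) + 1 := by linear_combination key + s * hc0
      have hcond : ¬ ε < w * (r - 1 - v) := by push_neg; linarith
      rw [if_neg hcond] at hkδ
      obtain ⟨h1, h2, h3⟩ := hkδ
      -- ε + r - 2 - v = (w+1)*(r-1-v), so k = r-1-v, δ = 0
      have heq : k * (w + 1) + δ = (w + 1) * (r - 1 - v) := by
        linear_combination h1.symm + hεv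
      have hk1 : k = r - 1 - v := by
        rcases lt_trichotomy k (r - 1 - v) with h | h | h
        · exfalso
          have ha : k + 1 ≤ r - 1 - v := by linarith
          have := mul_le_mul_of_nonneg_right ha (by linarith : (0:ℤ) ≤ w + 1)
          nlinarith
        · exact h
        · exfalso
          have ha : r - 1 - v + 1 ≤ k := by linarith
          have := mul_le_mul_of_nonneg_right ha (by linarith : (0:ℤ) ≤ w + 1)
          nlinarith
      have hδ0 : δ = 0 := by
        rw [hk1] at heq; linarith [heq]
      refine ⟨Or.inr ⟨hv1', hεv⟩, ?_⟩
      have hεQ : (ε : ℚ) = (w : ℚ) * ((r : ℚ) - 1 - v) + 1 := by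
        exact_mod_cast congrArg (fun x : ℤ => (x : ℚ)) hεv
      have hδQ : (δ : ℚ) = 0 := by exact_mod_cast hδ0
      have hkQ : (k : ℚ) = (r : ℚ) - 1 - v := by
        exact_mod_cast congrArg (fun x : ℤ => (x : ℚ)) hk1
      have hsQ : (s : ℚ) = (w : ℚ) * ((r : ℚ) - 2) + v + 1 := by
        have : ((s : ℤ) : ℚ) - 1 = ((w * (r - 2) + v : ℤ) : ℚ) := by
          exact_mod_cast congrArg (fun x : ℤ => (x : ℚ)) hwv
        push_cast at this
        linarith
      have hsne : ((w : ℚ) * ((r : ℚ) - 2) + v + 1) ≠ 0 := by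
        rw [← hsQ]
        have : (0:ℚ) < s := by exact_mod_cast (by linarith : (0:ℤ) < s)
        linarith
      rw [hR, hεQ, hδQ, hkQ, hG, hsQ]
      field_simp [hsne]
      ring
  obtain ⟨ha, hR1⟩ := main
  refine ⟨ha, hR1, ?_⟩
  -- part (c)
  have hsQpos : (0:ℚ) < s := by exact_mod_cast (by linarith : (0:ℤ) < s)
  have heQ : (e : ℚ) * s = (d : ℚ) + 2 * G - 2 - s := by exact_mod_cast he
  have h2s : ((s:ℚ)) ≠ 0 := ne_of_gt hsQpos
  have hformula : (d : ℚ) ^ 2 / (2 * s) + ((d : ℚ) / (2 * s)) * (2 * G - 2 - s)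
      = (e : ℚ) * d / 2 := by
    field_simp
    linear_combination (-1 : ℚ) * (d : ℚ) * heQ
  rw [hR1, hformula] at hp
  have hepQ : (e : ℚ) * d ≤ 2 * p - 2 := by exact_mod_cast hep
  have heqed : (2 * (p:ℚ) - 2) = (e : ℚ) * d := by linarith
  rw [heqed, ← heQ]
  field_simp
end

section
/- With r, d, s, G as in the context, assume d > 4s⁴/(r-2). Let e be an integer and R' a rational number with |R'| ≤ s³/(r-2) such that e = d/s + (2G - 2 - s)/s + 2(R' - 1)/d (this is equation (14) for a subcanonical curve of maximal genus). Then R' = 1 and e·s = d + 2G - 2 - s, i.e. e equals the speciality bound d/s + (2G-2-s)/s. (This is the numerical deduction proving the implication (iii) ⇒ (i) in Proposition 2.) -/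
/-- numerical deduction of (iii) ⇒ (i) in Proposition 2: if
`d > 4s⁴/(r-2)`, `|R'| ≤ s³/(r-2)` and `e = d/s + (2G-2-s)/s + 2(R'-1)/d`
(equation (14)), then `R' = 1` and `e·s = d + 2G - 2 - s`. -/
theorem stmt_8 (r d s m ε w v G e : ℤ) (R' : ℚ)
    (hr : 2 ≤ r - 1) (hs : r - 1 ≤ s)
    (hdiv : d - 1 = m * s + ε) (hε0 : 0 ≤ ε) (hε1 : ε ≤ s - 1)
    (hwv : s - 1 = w * (r - 2) + v) (hv0 : 0 ≤ v) (hv1 : v ≤ r - 3)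
    (hG : (G : ℚ) = (w : ℚ) * (w - 1) / 2 * (r - 2) + (w : ℚ) * v)
    (hd : (d : ℚ) > 4 * (s : ℚ) ^ 4 / (r - 2))
    (hR' : |R'| ≤ (s : ℚ) ^ 3 / (r - 2))
    (he : (e : ℚ) = (d : ℚ) / s + (2 * (G : ℚ) - 2 - s) / s + 2 * (R' - 1) / d) :
    R' = 1 ∧ e * s = d + 2 * G - 2 - s := by
  have hs2 : (2:ℤ) ≤ s := le_trans hr hs
  have hsQ : (0:ℚ) < (s:ℚ) := by exact_mod_cast (by linarith : (0:ℤ) < s)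
  have hs2Q : (2:ℚ) ≤ (s:ℚ) := by exact_mod_cast hs2
  have hrQ : (0:ℚ) < (r:ℚ) - 2 := by
    have h : (0:ℤ) < r - 2 := by linarith
    exact_mod_cast h
  have hdQ : (0:ℚ) < (d:ℚ) := by
    have h4 : (0:ℚ) < 4*(s:ℚ)^4/((r:ℚ)-2) := by positivity
    linarith
  have hsne : (s:ℚ) ≠ 0 := ne_of_gt hsQ
  have hdne : (d:ℚ) ≠ 0 := ne_of_gt hdQ
  -- clear denominators in he
  have key : ((e*s - (d + 2*G - 2 - s) : ℤ) : ℚ) * d = 2*(s:ℚ)*(R'-1) := by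
    have h1 : (e:ℚ) * (s*d) = ((d:ℚ)/s + (2*(G:ℚ)-2-(s:ℚ))/s + 2*(R'-1)/d) * (s*d) := by
      rw [he]
    field_simp at h1
    push_cast
    linear_combination h1
  set N : ℤ := e*s - (d + 2*G - 2 - s) with hN
  have hrs : (r:ℚ) - 2 ≤ (s:ℚ)^3 := by
    have h : (r:ℚ) - 2 ≤ (s:ℚ) := by
      have : (r:ℤ) - 2 ≤ s := by linarith
      exact_mod_cast this
    nlinarith [sq_nonneg ((s:ℚ) - 1), sq_nonneg ((s:ℚ) + 1)]
  have hRb : |R'| * ((r:ℚ) - 2) ≤ (s:ℚ)^3 := by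
    have := (le_div_iff₀ hrQ).mp hR'
    linarith
  have hdb : 4*(s:ℚ)^4 < (d:ℚ) * ((r:ℚ) - 2) := (div_lt_iff₀ hrQ).mp hd
  have h2 : |R' - 1| ≤ |R'| + 1 := by
    calc |R' - 1| ≤ |R'| + |(1:ℚ)| := abs_sub R' 1
      _ = |R'| + 1 := by norm_num
  have h5 : 2*(s:ℚ)*(|R'|+1) * ((r:ℚ)-2) < (d:ℚ) * ((r:ℚ)-2) := by
    nlinarith [abs_nonneg R', hsQ, hrs, hRb, hdb, hs2Q]
  have h6 : 2*(s:ℚ)*(|R'|+1) < (d:ℚ) := lt_of_mul_lt_mul_right h5 hrQ.le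
  have e1 : |(N:ℚ)| * d = 2*(s:ℚ)*|R' - 1| := by
    rw [show 2*(s:ℚ)*|R' - 1| = |2*(s:ℚ)*(R'-1)| by
      rw [abs_mul, abs_of_pos (by linarith : (0:ℚ) < 2*(s:ℚ))]]
    rw [← key, abs_mul, abs_of_pos hdQ]
  have hNlt : |(N:ℚ)| < 1 := by
    have h7 : |(N:ℚ)| * d < 1 * d := by
      rw [e1, one_mul]
      have : 2*(s:ℚ)*|R' - 1| ≤ 2*(s:ℚ)*(|R'|+1) := by nlinarith [abs_nonneg (R'-1)]
      linarith
    exact lt_of_mul_lt_mul_right h7 hdQ.le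
  have hN0 : N = 0 := by
    rw [← Int.cast_abs] at hNlt
    have h : |N| < 1 := by exact_mod_cast hNlt
    obtain ⟨h1a, h1b⟩ := abs_lt.mp h
    omega
  have hR1 : R' = 1 := by
    have hk : ((N:ℤ):ℚ) * d = 2*(s:ℚ)*(R'-1) := key
    rw [hN0] at hk
    push_cast at hk
    have h0 : 2*(s:ℚ)*(R'-1) = 0 := by linarith
    rcases mul_eq_zero.mp h0 with h | h
    · exact absurd h (by positivity)
    · linarith
  exact ⟨hR1, by omega⟩
end

section
/- Let s, t, u, β be integers with u ≥ 2, t ≥ 2, 0 ≤ β ≤ u - 1, β ≡ t - 1 (mod u), and s ≥ 3t⁴. Let π and ρ₁ be rational numbers with |ρ₁ + 1| ≤ t³/3. If π ≥ s²/(2t) + (s/2)·(t/u + u - 5) + 1 and π ≤ s²/(2t) + (s/2)·( t/u + u - 5 - (u-1-β)(1+β)(u-1)/(u·t) ) + ρ₁ + 1, then β = u - 1 (hence u divides t) and ρ₁ ≥ 0. (This is the numerical deduction (13) in the proof of Theorem B: comparing the sectional genus π of the surface S in the flag C ⊂ S ⊂ T ⊂ U ⊂ P^5 with the Halphen-type bound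 G(4;s,t,u) of [CCD] forces u | t and ρ₁(s,t,u) ≥ 0.) -/
/-- the numerical deduction (13) in the proof of Theorem B: with
`u ≥ 2`, `t ≥ 2`, `0 ≤ β ≤ u-1`, `β ≡ t-1 (mod u)`, `s ≥ 3t⁴`,
`|ρ₁ + 1| ≤ t³/3`, if `π ≥ s²/(2t) + (s/2)(t/u + u - 5) + 1` and
`π ≤ s²/(2t) + (s/2)(t/u + u - 5 - (u-1-β)(1+β)(u-1)/(ut)) + ρ₁ + 1`, then
`β = u - 1` (hence `u ∣ t`) and `ρ₁ ≥ 0`. -/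
theorem stmt_10 (s t u β : ℤ) (π ρ₁ : ℚ)
    (hu : 2 ≤ u) (ht : 2 ≤ t)
    (hβ0 : 0 ≤ β) (hβ1 : β ≤ u - 1)
    (hβmod : β ≡ t - 1 [ZMOD u])
    (hs : s ≥ 3 * t ^ 4)
    (hρ₁ : |ρ₁ + 1| ≤ (t : ℚ) ^ 3 / 3)
    (hπlo : π ≥ (s : ℚ) ^ 2 / (2 * t) + (s : ℚ) / 2 * ((t : ℚ) / u + u - 5) + 1)
    (hπhi : π ≤ (s : ℚ) ^ 2 / (2 * t)
        + (s : ℚ) / 2 * ((t : ℚ) / u + (u : ℚ) - 5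
          - ((u : ℚ) - 1 - β) * (1 + β) * ((u : ℚ) - 1) / ((u : ℚ) * t))
        + ρ₁ + 1) :
    β = u - 1 ∧ u ∣ t ∧ 0 ≤ ρ₁ := by
  have htq : (2:ℚ) ≤ (t:ℚ) := by exact_mod_cast ht
  have huq : (2:ℚ) ≤ (u:ℚ) := by exact_mod_cast hu
  have hβ0q : (0:ℚ) ≤ (β:ℚ) := by exact_mod_cast hβ0
  have hβ1q : (β:ℚ) ≤ (u:ℚ) - 1 := by exact_mod_cast hβ1
  have hsq : (3:ℚ) * (t:ℚ)^4 ≤ (s:ℚ) := by exact_mod_cast hs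
  have htpos : (0:ℚ) < t := by linarith
  have hupos : (0:ℚ) < u := by linarith
  have hutpos : (0:ℚ) < (u:ℚ) * t := mul_pos hupos htpos
  have hspos : (0:ℚ) < s := by nlinarith [pow_pos htpos 4]
  have hρhi : ρ₁ ≤ (t:ℚ)^3/3 := by
    have := (abs_le.mp hρ₁).2; linarith
  -- key inequality from hπlo ≤ π ≤ hπhi
  have key : (s : ℚ) / 2 * (((u : ℚ) - 1 - β) * (1 + β) * ((u : ℚ) - 1) / ((u : ℚ) * t)) ≤ ρ₁ := by
    nlinarith [hπlo, hπhi]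
  have hβeq : β = u - 1 := by
    by_contra hne
    have hβ2 : (β:ℚ) ≤ (u:ℚ) - 2 := by
      have : β ≤ u - 2 := by omega
      exact_mod_cast this
    set Y : ℚ := ((u : ℚ) - 1 - β) * (1 + β) * ((u : ℚ) - 1) with hYdef
    have key' : (s:ℚ) * Y ≤ ρ₁ * (2 * ((u:ℚ)*t)) := by
      have h2 : (s:ℚ)/2 * (Y/((u:ℚ)*t)) = (s:ℚ)*Y / (2*((u:ℚ)*t)) := by ring
      rw [h2, div_le_iff₀ (by positivity)] at key
      exact key
    have hY : ((u:ℚ) - 1)^2 ≤ Y := by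
      rw [hYdef]
      nlinarith [mul_nonneg hβ0q (sub_nonneg.mpr hβ2)]
    have hsY : (3:ℚ)*(t:ℚ)^4*((u:ℚ)-1)^2 ≤ (s:ℚ)*Y :=
      mul_le_mul hsq hY (sq_nonneg _) (le_of_lt hspos)
    have hρut : ρ₁ * (2*((u:ℚ)*t)) ≤ ((t:ℚ)^3/3) * (2*((u:ℚ)*t)) :=
      mul_le_mul_of_nonneg_right hρhi (by positivity)
    have hA : (3:ℚ)*(t:ℚ)^4*((u:ℚ)-1)^2 ≤ ((t:ℚ)^3/3) * (2*((u:ℚ)*t)) :=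
      le_trans hsY (le_trans key' hρut)
    have hu9 : (9:ℚ)*((u:ℚ)-1)^2 ≤ 2*(u:ℚ) := by
      nlinarith [hA, pow_pos htpos 4]
    nlinarith [hu9, sq_nonneg ((u:ℚ)-2)]
  refine ⟨hβeq, ?_, ?_⟩
  · have h1 : u ∣ (t - 1) - β := Int.ModEq.dvd hβmod
    have h2 : u ∣ t - u := by simpa [hβeq] using h1
    have h3 : u ∣ (t - u) + u := h2.add (dvd_refl u)
    simpa using h3
  · have h0 : ((u:ℚ) - 1 - β) = 0 := by
      have : (β:ℚ) = (u:ℚ) - 1 := by exact_mod_cast hβeq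
      linarith
    have hz : ((u : ℚ) - 1 - β) * (1 + β) * ((u : ℚ) - 1) / ((u : ℚ) * t) = 0 := by
      rw [h0]; ring
    rw [hz, sub_zero] at hπhi
    linarith only [hπlo, hπhi]
end
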